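/- arXiv:2002.09312 — 3 statements merged into one kernel-verified Lean document; each statement's English description precedes it below -/
import Mathlib

section
/- For every Schwartz function f on ℝ⁴ and every natural number k there exists a constant C_k > 0 such that for all m ≥ 0, the inner Källén–Lehmann integral satisfies ∫_{ℝ³} |f̂(√(|p|²+m²), p)| / √(|p|²+m²) dp ≤ C_k (1+m²)^{-k}; in particular this integral is finite for every m ≥ 0. -/
open MeasureTheory Filter Topology SchwartzMap
open scoped FourierTransform

/-- The point `(p₀, p) ∈ ℝ⁴` built from a time component `p0 ∈ ℝ` and a
space momentum `p ∈ ℝ³`. -/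
noncomputable def timeSpace (p0 : ℝ) (p : EuclideanSpace ℝ (Fin 3)) :
    EuclideanSpace ℝ (Fin 4) :=
  (EuclideanSpace.equiv (Fin 4) ℝ).symm (Fin.cons p0 (EuclideanSpace.equiv (Fin 3) ℝ p))

/-- The inner Källén–Lehmann momentum integral
`∫_{ℝ³} f̂(√(|p|²+m²), p)/√(|p|²+m²) dp` at squared mass `m2 = m²`,
where `f̂ = 𝓕 f` is the Fourier transform of `f`. -/
noncomputable def KLinner (f : EuclideanSpace ℝ (Fin 4) → ℂ) (m2 : ℝ) : ℂ :=
  ∫ p : EuclideanSpace ℝ (Fin 3),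
    𝓕 f (timeSpace (Real.sqrt (‖p‖ ^ 2 + m2)) p) / (Real.sqrt (‖p‖ ^ 2 + m2) : ℂ)

/-- The Källén–Lehmann two-point functional
`W_ρ(f) = ∫_{[0,∞)} (∫_{ℝ³} f̂(√(|p|²+m²), p)/√(|p|²+m²) dp) dρ(m²)`
associated with a spectral measure `ρ` on `[0,∞)`. -/
noncomputable def KL (ρ : Measure ℝ) (f : EuclideanSpace ℝ (Fin 4) → ℂ) : ℂ :=
  ∫ m2 in Set.Ici (0 : ℝ), KLinner f m2 ∂ρ

/-- The scaled Källén–Lehmann functional `W_{ρ,λ}(f) = λ⁻⁴ W_ρ(f(λ⁻¹ ·))`. -/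
noncomputable def KLscaled (ρ : Measure ℝ) (lam : ℝ) (f : EuclideanSpace ℝ (Fin 4) → ℂ) : ℂ :=
  (lam ^ (4 : ℕ) : ℝ)⁻¹ * KL ρ (fun x => f (lam⁻¹ • x))

/-
Since `𝓕 f` is a Schwartz function, `‖𝓕 f x‖ ≤ C (1 + ‖x‖)^{-(2k+4)}`. On the mass shell
`x = (ω, p)` with `ω = √(‖p‖² + m²)` one has `‖x‖ ≥ ω ≥ max ‖p‖ |m|`, hence
`(1 + ‖x‖)^{-(2k+4)} ≤ (1 + m²)^{-k} (1 + ‖p‖)^{-4}` and `1/ω ≤ ‖p‖⁻¹`. The integrand is therefore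
dominated by `C (1 + m²)^{-k} ‖p‖⁻¹ (1 + ‖p‖)^{-4}`, which is integrable on `ℝ³`:
the singularity `‖p‖⁻¹` is weaker than the dimension, and the decay `‖p‖⁻⁵` at infinity stronger.
-/

open Metric Module

theorem integrable_norm_rpow_neg_mul_one_add_norm_rpow_neg {E : Type*} [NormedAddCommGroup E]
    [NormedSpace ℝ E] [FiniteDimensional ℝ E] [MeasurableSpace E] [BorelSpace E]
    {μ : Measure E} [μ.IsAddHaarMeasure] {a b : ℝ} (ha₀ : 0 ≤ a)
    (ha : a < finrank ℝ E) (hab : finrank ℝ E < a + b) :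
    Integrable (fun x : E => ‖x‖ ^ (-a) * (1 + ‖x‖) ^ (-b)) μ := by
  have hmeas : AEStronglyMeasurable (fun x : E => ‖x‖ ^ (-a) * (1 + ‖x‖) ^ (-b)) μ :=
    Measurable.aestronglyMeasurable (by fun_prop)
  have hnear : IntegrableOn (fun x : E => ‖x‖ ^ (-a) * (1 + ‖x‖) ^ (-b)) (ball 0 1) μ := by
    refine integrableOn_ball_of_norm_le_rpow (C := 1) ?_ ha (ae_of_all _ fun x => ?_) hmeas
    · exact_mod_cast (ha₀.trans_lt ha)
    rw [Real.norm_of_nonneg (by positivity), one_mul]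
    exact mul_le_of_le_one_right (by positivity)
      (Real.rpow_le_one_of_one_le_of_nonpos (by simp) (by linarith))
  have hfar : IntegrableOn (fun x : E => ‖x‖ ^ (-a) * (1 + ‖x‖) ^ (-b)) (ball 0 1)ᶜ μ := by
    refine (((integrable_one_add_norm hab).const_mul (2 ^ a)).integrableOn).mono' hmeas.restrict
      ((ae_restrict_iff' measurableSet_ball.compl).2 (ae_of_all _ fun x hx => ?_))
    have hx : 1 ≤ ‖x‖ := by simpa using hx
    have h2x : ‖x‖ ^ (-a) ≤ 2 ^ a * (1 + ‖x‖) ^ (-a) := by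
      calc ‖x‖ ^ (-a) = 2 ^ a * (2 * ‖x‖) ^ (-a) := by
            rw [Real.mul_rpow zero_le_two (by positivity), Real.rpow_neg zero_le_two,
              ← mul_assoc, mul_inv_cancel₀ (by positivity), one_mul]
        _ ≤ 2 ^ a * (1 + ‖x‖) ^ (-a) :=
            mul_le_mul_of_nonneg_left
              (Real.rpow_le_rpow_of_nonpos (by positivity) (by linarith) (by linarith))
              (by positivity)
    rw [Real.norm_of_nonneg (by positivity), neg_add, Real.rpow_add (by positivity), ← mul_assoc]
    gcongr
  simpa [integrableOn_univ] using hnear.union hfar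

theorem SchwartzMap.exists_norm_le_mul_one_add_norm_rpow_neg {E F : Type*}
    [NormedAddCommGroup E] [NormedSpace ℝ E] [NormedAddCommGroup F] [NormedSpace ℝ F]
    (f : 𝓢(E, F)) (n : ℕ) : ∃ C, 0 ≤ C ∧ ∀ x, ‖f x‖ ≤ C * (1 + ‖x‖) ^ (-(n : ℝ)) := by
  refine ⟨2 ^ n * (Finset.Iic (n, 0)).sup (fun m => SchwartzMap.seminorm ℝ m.1 m.2) f,
    by positivity, fun x => ?_⟩
  rw [Real.rpow_neg (by positivity), ← div_eq_mul_inv, le_div_iff₀ (by positivity),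
    Real.rpow_natCast, mul_comm]
  simpa using one_add_le_sup_seminorm_apply (𝕜 := ℝ) (m := (n, 0)) le_rfl le_rfl f x

theorem abs_le_norm_timeSpace (a : ℝ) (p : EuclideanSpace ℝ (Fin 3)) :
    |a| ≤ ‖timeSpace a p‖ :=
  PiLp.norm_apply_le (timeSpace a p) 0

@[fun_prop]
theorem Continuous.timeSpace {α : Type*} [TopologicalSpace α] {a : α → ℝ}
    {p : α → EuclideanSpace ℝ (Fin 3)} (ha : Continuous a) (hp : Continuous p) :
    Continuous fun y => _root_.timeSpace (a y) (p y) := by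
  unfold _root_.timeSpace
  fun_prop

theorem norm_comp_timeSpace_div_sqrt_le {F : Type*} [NormedAddCommGroup F]
    {g : EuclideanSpace ℝ (Fin 4) → F} {C : ℝ} (k : ℕ) (hC : 0 ≤ C)
    (hg : ∀ x, ‖g x‖ ≤ C * (1 + ‖x‖) ^ (-(2 * k + 4 : ℝ))) (m : ℝ)
    {p : EuclideanSpace ℝ (Fin 3)} (hp : p ≠ 0) :
    ‖g (timeSpace (Real.sqrt (‖p‖ ^ 2 + m ^ 2)) p)‖ / Real.sqrt (‖p‖ ^ 2 + m ^ 2)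
      ≤ C * (1 + m ^ 2) ^ (-(k : ℝ)) * (‖p‖ ^ (-1 : ℝ) * (1 + ‖p‖) ^ (-4 : ℝ)) := by
  set ω := Real.sqrt (‖p‖ ^ 2 + m ^ 2)
  set x := timeSpace ω p
  have hpω : ‖p‖ ≤ ω := Real.le_sqrt_of_sq_le (by nlinarith)
  have hmω : m ^ 2 ≤ ω ^ 2 := by
    rw [Real.sq_sqrt (by positivity)]
    nlinarith
  have hp0 : 0 < ‖p‖ := norm_pos_iff.2 hp
  have hω0 : 0 < ω := hp0.trans_le hpω
  have hωx : ω ≤ ‖x‖ := (le_abs_self ω).trans (abs_le_norm_timeSpace ω p)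
  have hdecay : (1 + ‖x‖) ^ (-(2 * k + 4 : ℝ))
      ≤ (1 + m ^ 2) ^ (-(k : ℝ)) * (1 + ‖p‖) ^ (-4 : ℝ) := by
    have hsq : 1 + m ^ 2 ≤ (1 + ‖x‖) ^ (2 : ℝ) := by
      rw [Real.rpow_two]; nlinarith
    rw [neg_add, Real.rpow_add (by positivity), ← mul_neg, Real.rpow_mul (by positivity)]
    exact mul_le_mul (Real.rpow_le_rpow_of_nonpos (by positivity) hsq (by simp))
      (Real.rpow_le_rpow_of_nonpos (by positivity) (by linarith) (by norm_num))
      (by positivity) (by positivity)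
  calc ‖g x‖ / ω = ‖g x‖ * ω ^ (-1 : ℝ) := by rw [Real.rpow_neg_one, div_eq_mul_inv]
    _ ≤ C * ((1 + m ^ 2) ^ (-(k : ℝ)) * (1 + ‖p‖) ^ (-4 : ℝ)) * ‖p‖ ^ (-1 : ℝ) := by
        gcongr ?_ * ?_
        · exact (hg x).trans (mul_le_mul_of_nonneg_left hdecay hC)
        · exact Real.rpow_le_rpow_of_nonpos hp0 hpω (by norm_num)
    _ = C * (1 + m ^ 2) ^ (-(k : ℝ)) * (‖p‖ ^ (-1 : ℝ) * (1 + ‖p‖) ^ (-4 : ℝ)) := by ring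

/-- For every Schwartz `f` on ℝ⁴ and every `k : ℕ` there is `C > 0` such that
for all `m ≥ 0` the inner Källén–Lehmann integral of `|f̂|` is finite and bounded by
`C (1+m²)^{-k}`. -/
theorem kl_inner_decay (f : 𝓢(EuclideanSpace ℝ (Fin 4), ℂ)) (k : ℕ) :
    ∃ C : ℝ, 0 < C ∧ ∀ m : ℝ, 0 ≤ m →
      Integrable (fun p : EuclideanSpace ℝ (Fin 3) =>
        ‖𝓕 (⇑f) (timeSpace (Real.sqrt (‖p‖ ^ 2 + m ^ 2)) p)‖ / Real.sqrt (‖p‖ ^ 2 + m ^ 2)) ∧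
      (∫ p : EuclideanSpace ℝ (Fin 3),
          ‖𝓕 (⇑f) (timeSpace (Real.sqrt (‖p‖ ^ 2 + m ^ 2)) p)‖ / Real.sqrt (‖p‖ ^ 2 + m ^ 2))
        ≤ C * (1 + m ^ 2) ^ (-(k : ℝ)) := by
  obtain ⟨C₀, hC₀, hf⟩ := (𝓕 f).exists_norm_le_mul_one_add_norm_rpow_neg (2 * k + 4)
  push_cast at hf
  have hw : Integrable fun p : EuclideanSpace ℝ (Fin 3) =>
      ‖p‖ ^ (-1 : ℝ) * (1 + ‖p‖) ^ (-4 : ℝ) :=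
    integrable_norm_rpow_neg_mul_one_add_norm_rpow_neg (by norm_num) (by norm_num) (by norm_num)
  set I := ∫ p : EuclideanSpace ℝ (Fin 3), ‖p‖ ^ (-1 : ℝ) * (1 + ‖p‖) ^ (-4 : ℝ)
  refine ⟨max (C₀ * I) 1, by positivity, fun m _ => ?_⟩
  have hbound : ∀ᵐ p : EuclideanSpace ℝ (Fin 3),
      ‖𝓕 (⇑f) (timeSpace (Real.sqrt (‖p‖ ^ 2 + m ^ 2)) p)‖ / Real.sqrt (‖p‖ ^ 2 + m ^ 2)
        ≤ C₀ * (1 + m ^ 2) ^ (-(k : ℝ)) * (‖p‖ ^ (-1 : ℝ) * (1 + ‖p‖) ^ (-4 : ℝ)) := by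
    -- only a.e.: at `p = 0` the majorant is `0 ^ (-1) = 0`, the integrand need not be
    filter_upwards [Measure.ae_ne volume 0] with p hp
    rw [← fourier_coe]
    exact norm_comp_timeSpace_div_sqrt_le k hC₀ hf m hp
  have hmeas : AEStronglyMeasurable (fun p : EuclideanSpace ℝ (Fin 3) =>
      ‖𝓕 (⇑f) (timeSpace (Real.sqrt (‖p‖ ^ 2 + m ^ 2)) p)‖ / Real.sqrt (‖p‖ ^ 2 + m ^ 2)) := by
    rw [← fourier_coe]
    exact Measurable.aestronglyMeasurable (by fun_prop)
  have hint := (hw.const_mul _).mono' hmeas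
    (hbound.mono fun p hp => by rwa [Real.norm_of_nonneg (by positivity)])
  refine ⟨hint, ?_⟩
  calc _ ≤ ∫ p : EuclideanSpace ℝ (Fin 3),
        C₀ * (1 + m ^ 2) ^ (-(k : ℝ)) * (‖p‖ ^ (-1 : ℝ) * (1 + ‖p‖) ^ (-4 : ℝ)) :=
        integral_mono_ae hint (hw.const_mul _) hbound
    _ = C₀ * I * (1 + m ^ 2) ^ (-(k : ℝ)) := by rw [integral_const_mul]; ring
    _ ≤ max (C₀ * I) 1 * (1 + m ^ 2) ^ (-(k : ℝ)) := by gcongr; exact le_max_left _ _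
end

section
/- Let ρ be a polynomially bounded positive Borel measure on [0,∞). Then the Källén–Lehmann functional f ↦ W_ρ(f) = ∫_{[0,∞)} (∫_{ℝ³} f̂(√(|p|²+m²), p)/√(|p|²+m²) dp) dρ(m²) is a continuous linear functional on the Schwartz space 𝒮(ℝ⁴), i.e. a tempered distribution. -/
open MeasureTheory Filter Topology SchwartzMap
open scoped FourierTransform

/-!
`W_ρ(f) = ∫ 𝓕 f dν`, where `ν` is the image of `dρ(m²) d³p / ω` under `(m², p) ↦ (ω, p)`,
`ω = √(|p|² + m²)`: the superposition over `ρ` of the invariant measures on the mass shells.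
On the shell `|(ω, p)|² = 2|p|² + m²`, so
`(1 + |(ω, p)|)^(-(4 + 2j)) / ω ≤ (1 + m²)^(-j) · |p|⁻¹ (1 + |p|)^(-4)`.
The second factor is integrable on `ℝ³`, and the first is `ρ`-integrable for some `j` because a
polynomially bounded measure has temperate growth (sum over the shells `n ≤ m² < n + 1`).
Hence `ν` has temperate growth, integration against `ν` is continuous on Schwartz space, and so
is the Fourier transform.
-/

open scoped NNReal ENNReal
open Set Metric

section TemperateGrowth

variable {E : Type*} [NormedAddCommGroup E] [MeasurableSpace E] {μ : Measure E} {C : ℝ} {N : ℕ}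

lemma one_add_pow_div_pow_add_two_le {a : ℝ} (ha : 1 ≤ a) (N : ℕ) :
    (1 + a ^ N) / a ^ (N + 2) ≤ 2 / a ^ 2 := by
  have h1 : 1 ≤ a ^ N := one_le_pow₀ ha
  rw [div_le_div_iff₀ (by positivity) (by positivity), pow_add]
  nlinarith [pow_pos (by linarith : (0 : ℝ) < a) 2]

lemma setLIntegral_shell_enorm_one_add_norm_rpow_le
    (hμ : ∀ R, 0 ≤ R → μ (closedBall 0 R) ≤ ENNReal.ofReal (C * (1 + R ^ N))) (n : ℕ) :
    ∫⁻ x in {x : E | ‖x‖ ∈ Ico (n : ℝ) (n + 1)}, ‖(1 + ‖x‖) ^ (-((N + 2 : ℕ) : ℝ))‖ₑ ∂μ ≤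
      ENNReal.ofReal (2 * |C| / (n + 1) ^ 2) := by
  have hshell : {x : E | ‖x‖ ∈ Ico (n : ℝ) (n + 1)} ⊆ closedBall 0 (n + 1) := fun x hx =>
    mem_closedBall_zero_iff.2 hx.2.le
  have hbound : ∀ x ∈ {x : E | ‖x‖ ∈ Ico (n : ℝ) (n + 1)},
      ‖(1 + ‖x‖) ^ (-((N + 2 : ℕ) : ℝ))‖ₑ ≤ ENNReal.ofReal (((n + 1 : ℝ) ^ (N + 2))⁻¹) := by
    intro x hx
    have hx : (n : ℝ) ≤ ‖x‖ := hx.1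
    rw [Real.rpow_neg (by positivity), Real.rpow_natCast, Real.enorm_of_nonneg (by positivity),
      add_comm 1]
    gcongr
  calc _ ≤ ∫⁻ _ in {x : E | ‖x‖ ∈ Ico (n : ℝ) (n + 1)},
        ENNReal.ofReal (((n + 1 : ℝ) ^ (N + 2))⁻¹) ∂μ :=
        setLIntegral_mono measurable_const hbound
    _ ≤ ENNReal.ofReal (((n + 1 : ℝ) ^ (N + 2))⁻¹) *
        ENNReal.ofReal (|C| * (1 + (n + 1) ^ N)) := by
        rw [setLIntegral_const]
        gcongr
        refine (measure_mono hshell).trans ((hμ _ (by positivity)).trans ?_)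
        gcongr
        exact le_abs_self C
    _ ≤ ENNReal.ofReal (2 * |C| / (n + 1) ^ 2) := by
        rw [← ENNReal.ofReal_mul (by positivity)]
        gcongr
        calc ((n + 1 : ℝ) ^ (N + 2))⁻¹ * (|C| * (1 + (n + 1) ^ N))
            = |C| * ((1 + (n + 1) ^ N) / (n + 1) ^ (N + 2)) := by ring
          _ ≤ |C| * (2 / (n + 1) ^ 2) := mul_le_mul_of_nonneg_left
            (one_add_pow_div_pow_add_two_le (by simp) N) (abs_nonneg C)
          _ = 2 * |C| / (n + 1) ^ 2 := by ring

theorem hasTemperateGrowth_of_measure_closedBall_le [BorelSpace E]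
    (hμ : ∀ R, 0 ≤ R → μ (closedBall 0 R) ≤ ENNReal.ofReal (C * (1 + R ^ N))) :
    μ.HasTemperateGrowth := by
  refine ⟨⟨N + 2, ⟨(by fun_prop : Measurable _).aestronglyMeasurable, ?_⟩⟩⟩
  have hcover : ⋃ n : ℕ, {x : E | ‖x‖ ∈ Ico (n : ℝ) (n + 1)} = univ :=
    eq_univ_of_forall fun x => mem_iUnion.2
      ⟨⌊‖x‖⌋₊, Nat.floor_le (norm_nonneg x), Nat.lt_floor_add_one _⟩
  have hsum : Summable fun n : ℕ => 2 * |C| / ((n : ℝ) + 1) ^ 2 := by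
    simpa [div_eq_mul_inv] using
      ((summable_nat_add_iff 1).2 (Real.summable_nat_pow_inv.2 one_lt_two)).mul_left (2 * |C|)
  calc ∫⁻ x, ‖(1 + ‖x‖) ^ (-((N + 2 : ℕ) : ℝ))‖ₑ ∂μ
      ≤ ∑' n : ℕ, ∫⁻ x in {x : E | ‖x‖ ∈ Ico (n : ℝ) (n + 1)},
          ‖(1 + ‖x‖) ^ (-((N + 2 : ℕ) : ℝ))‖ₑ ∂μ := by
        rw [← setLIntegral_univ, ← hcover]
        exact lintegral_iUnion_le _ _
    _ ≤ ∑' n : ℕ, ENNReal.ofReal (2 * |C| / (n + 1) ^ 2) :=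
        ENNReal.tsum_le_tsum (setLIntegral_shell_enorm_one_add_norm_rpow_le hμ)
    _ < ∞ := by
        rw [← ENNReal.ofReal_tsum_of_nonneg (fun n => by positivity) hsum]
        exact ENNReal.ofReal_lt_top

end TemperateGrowth

theorem isFiniteMeasureOnCompacts_of_measure_closedBall_lt_top {X : Type*} [PseudoMetricSpace X]
    [MeasurableSpace X] {μ : Measure X} (x : X) (hμ : ∀ R, 0 ≤ R → μ (closedBall x R) < ∞) :
    IsFiniteMeasureOnCompacts μ := by
  refine ⟨fun K hK => ?_⟩
  obtain ⟨R, hR, hKR⟩ := hK.isBounded.subset_closedBall_lt 0 x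
  exact (measure_mono hKR).trans_lt (hμ R hR.le)

lemma restrict_Ici_apply_closedBall (ρ : Measure ℝ) {R : ℝ} (hR : 0 ≤ R) :
    ρ.restrict (Ici 0) (closedBall 0 R) = ρ (Icc 0 R) := by
  rw [Measure.restrict_apply measurableSet_closedBall]
  congr 1
  ext x
  simp only [mem_inter_iff, mem_closedBall, dist_zero_right, Real.norm_eq_abs, abs_le, mem_Ici,
    mem_Icc]
  grind

theorem integrable_inv_norm_mul_one_add_norm_rpow_neg {E : Type*} [NormedAddCommGroup E]
    [NormedSpace ℝ E] [FiniteDimensional ℝ E] [MeasurableSpace E] [BorelSpace E] {μ : Measure E}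
    [μ.IsAddHaarMeasure] {r : ℝ} (hd : 1 < Module.finrank ℝ E) (hr : Module.finrank ℝ E < r) :
    Integrable (fun x : E => ‖x‖⁻¹ * (1 + ‖x‖) ^ (-r)) μ := by
  have hr0 : 0 < r := (Nat.cast_nonneg _).trans_lt hr
  have hmeas : AEStronglyMeasurable (fun x : E => ‖x‖⁻¹ * (1 + ‖x‖) ^ (-r)) μ :=
    (by fun_prop : Measurable _).aestronglyMeasurable
  have hnonneg : ∀ x : E, 0 ≤ ‖x‖⁻¹ * (1 + ‖x‖) ^ (-r) := fun x => by positivity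
  rw [← integrableOn_univ, ← union_compl_self (ball (0 : E) 1)]
  refine IntegrableOn.union ?_ ?_
  · refine integrableOn_ball_of_norm_le_rpow (C := 1) (α := 1) hd.le (by exact_mod_cast hd)
      (.of_forall fun x => ?_) hmeas
    rw [Real.norm_of_nonneg (hnonneg x), Real.rpow_neg_one, one_mul]
    exact mul_le_of_le_one_right (inv_nonneg.2 (norm_nonneg x))
      (Real.rpow_le_one_of_one_le_of_nonpos (by simp) (neg_nonpos.2 hr0.le))
  · refine (integrable_one_add_norm hr).integrableOn.mono' hmeas.restrict
      ((ae_restrict_iff' measurableSet_ball.compl).2 (.of_forall fun x hx => ?_))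
    have hx : 1 ≤ ‖x‖ := by simpa using hx
    rw [Real.norm_of_nonneg (hnonneg x)]
    exact mul_le_of_le_one_left (by positivity) (inv_le_one_of_one_le₀ hx)

local notation "ℝ³" => EuclideanSpace ℝ (Fin 3)
local notation "ℝ⁴" => EuclideanSpace ℝ (Fin 4)

lemma norm_timeSpace_sq (p0 : ℝ) (p : ℝ³) : ‖timeSpace p0 p‖ ^ 2 = p0 ^ 2 + ‖p‖ ^ 2 := by
  simp [EuclideanSpace.norm_sq_eq, Fin.sum_univ_succ, timeSpace]

@[fun_prop]
lemma continuous_timeSpace : Continuous fun x : ℝ × ℝ³ => timeSpace x.1 x.2 := by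
  unfold timeSpace
  fun_prop

section MassShell

noncomputable def shellEnergy (x : ℝ × ℝ³) : ℝ := √(‖x.2‖ ^ 2 + x.1)

noncomputable def massShell (x : ℝ × ℝ³) : ℝ⁴ := timeSpace (shellEnergy x) x.2

noncomputable def invShellEnergy (x : ℝ × ℝ³) : ℝ≥0 := (shellEnergy x).toNNReal⁻¹

@[fun_prop]
lemma continuous_shellEnergy : Continuous shellEnergy := by
  unfold shellEnergy
  fun_prop

@[fun_prop]
lemma continuous_massShell : Continuous massShell := by
  unfold massShell
  fun_prop

@[fun_prop]
lemma measurable_invShellEnergy : Measurable invShellEnergy := by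
  unfold invShellEnergy
  fun_prop

lemma coe_invShellEnergy (x : ℝ × ℝ³) : (invShellEnergy x : ℝ) = (shellEnergy x)⁻¹ := by
  rw [invShellEnergy, NNReal.coe_inv, Real.coe_toNNReal (shellEnergy x) (Real.sqrt_nonneg _)]

lemma norm_massShell_sq {m2 : ℝ} (hm : 0 ≤ m2) (p : ℝ³) :
    ‖massShell (m2, p)‖ ^ 2 = 2 * ‖p‖ ^ 2 + m2 := by
  rw [massShell, norm_timeSpace_sq, shellEnergy, Real.sq_sqrt (by positivity)]
  ring

lemma invShellEnergy_mul_rpow_le {m2 : ℝ} (hm : 0 ≤ m2) {p : ℝ³} (hp : p ≠ 0) (j : ℕ) :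
    invShellEnergy (m2, p) * (1 + ‖massShell (m2, p)‖) ^ (-((4 + 2 * j : ℕ) : ℝ)) ≤
      (1 + ‖m2‖) ^ (-(j : ℝ)) * (‖p‖⁻¹ * (1 + ‖p‖) ^ (-(4 : ℝ))) := by
  have hq := norm_massShell_sq hm p
  have hpq : ‖p‖ ≤ ‖massShell (m2, p)‖ := by nlinarith [norm_nonneg (massShell (m2, p))]
  have hmq : 1 + m2 ≤ (1 + ‖massShell (m2, p)‖) ^ 2 := by
    nlinarith [norm_nonneg (massShell (m2, p))]
  have hω : ‖p‖ ≤ shellEnergy (m2, p) := Real.le_sqrt_of_sq_le (by simp; linarith)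
  have hp0 : 0 < ‖p‖ := norm_pos_iff.2 hp
  rw [coe_invShellEnergy, Real.norm_of_nonneg hm, show (-(4 : ℝ)) = -((4 : ℕ) : ℝ) by norm_num]
  simp only [Real.rpow_neg_natCast, zpow_neg, zpow_natCast]
  calc (shellEnergy (m2, p))⁻¹ * ((1 + ‖massShell (m2, p)‖) ^ (4 + 2 * j))⁻¹
      = (shellEnergy (m2, p))⁻¹ *
          (((1 + ‖massShell (m2, p)‖) ^ 4)⁻¹ * (((1 + ‖massShell (m2, p)‖) ^ 2) ^ j)⁻¹) := by
        rw [pow_add, pow_mul, mul_inv]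
    _ ≤ ‖p‖⁻¹ * (((1 + ‖p‖) ^ 4)⁻¹ * ((1 + m2) ^ j)⁻¹) := by gcongr
    _ = ((1 + m2) ^ j)⁻¹ * (‖p‖⁻¹ * ((1 + ‖p‖) ^ 4)⁻¹) := by ring

variable {ρ : Measure ℝ}

noncomputable def massShellMeasure (ρ : Measure ℝ) : Measure ℝ⁴ :=
  (((ρ.restrict (Ici 0)).prod volume).withDensity fun x => invShellEnergy x).map massShell

lemma integrable_massShellMeasure_iff {E : Type*} [NormedAddCommGroup E] [NormedSpace ℝ E]
    {F : ℝ⁴ → E} (hF : AEStronglyMeasurable F (massShellMeasure ρ)) :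
    Integrable F (massShellMeasure ρ) ↔
      Integrable (fun x => invShellEnergy x • F (massShell x))
        ((ρ.restrict (Ici 0)).prod volume) := by
  rw [massShellMeasure, integrable_map_measure hF continuous_massShell.aemeasurable,
    ← integrable_withDensity_iff_integrable_smul measurable_invShellEnergy]
  rfl

lemma integral_massShellMeasure {E : Type*} [NormedAddCommGroup E] [NormedSpace ℝ E]
    [SFinite (ρ.restrict (Ici 0))] {F : ℝ⁴ → E} (hF : Integrable F (massShellMeasure ρ)) :
    ∫ q, F q ∂massShellMeasure ρ =
      ∫ m2 in Ici 0, (∫ p : ℝ³, invShellEnergy (m2, p) • F (massShell (m2, p))) ∂ρ := by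
  rw [massShellMeasure, integral_map continuous_massShell.aemeasurable hF.aestronglyMeasurable,
    integral_withDensity_eq_integral_smul measurable_invShellEnergy,
    integral_prod _ ((integrable_massShellMeasure_iff hF.aestronglyMeasurable).1 hF)]

instance hasTemperateGrowth_massShellMeasure [SFinite (ρ.restrict (Ici 0))]
    [(ρ.restrict (Ici 0)).HasTemperateGrowth] : (massShellMeasure ρ).HasTemperateGrowth := by
  set j := (ρ.restrict (Ici 0)).integrablePower
  refine ⟨⟨4 + 2 * j, ?_⟩⟩
  rw [integrable_massShellMeasure_iff (by fun_prop : Measurable _).aestronglyMeasurable]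
  have hΦ := integrable_inv_norm_mul_one_add_norm_rpow_neg (μ := (volume : Measure ℝ³)) (r := 4)
    (by simp) (by simp; norm_num)
  refine ((Measure.integrable_pow_neg_integrablePower _).mul_prod hΦ).mono'
    (by fun_prop : Measurable _).aestronglyMeasurable ?_
  filter_upwards [Measure.quasiMeasurePreserving_fst.ae (ae_restrict_mem measurableSet_Ici),
    Measure.quasiMeasurePreserving_snd.ae (Measure.ae_ne volume 0)] with x hm hp
  rw [NNReal.smul_def, smul_eq_mul, norm_mul, NNReal.norm_eq, Real.norm_of_nonneg (by positivity)]
  exact invShellEnergy_mul_rpow_le hm hp j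

end MassShell

/-- For a polynomially bounded positive Borel measure `ρ` on `[0,∞)`, the
Källén–Lehmann functional `f ↦ W_ρ(f)` is a tempered distribution, i.e. it agrees with a
continuous linear functional on the Schwartz space `𝓢(ℝ⁴, ℂ)`. -/
theorem kl_tempered_distribution (ρ : Measure ℝ) (C : ℝ) (N : ℕ)
    (hρ : ∀ L : ℝ, 0 ≤ L → ρ (Set.Icc 0 L) ≤ ENNReal.ofReal (C * (1 + L ^ N))) :
    ∃ T : 𝓢(EuclideanSpace ℝ (Fin 4), ℂ) →L[ℂ] ℂ,
      ∀ f : 𝓢(EuclideanSpace ℝ (Fin 4), ℂ), T f = KL ρ ⇑f := by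
  have : IsFiniteMeasureOnCompacts (ρ.restrict (Ici 0)) :=
    isFiniteMeasureOnCompacts_of_measure_closedBall_lt_top 0 fun R hR =>
      (restrict_Ici_apply_closedBall ρ hR).trans_lt ((hρ R hR).trans_lt ENNReal.ofReal_lt_top)
  have : (ρ.restrict (Ici 0)).HasTemperateGrowth :=
    hasTemperateGrowth_of_measure_closedBall_le fun R hR =>
      (restrict_Ici_apply_closedBall ρ hR).trans_le (hρ R hR)
  refine ⟨(integralCLM ℂ (massShellMeasure ρ)).comp (FourierTransform.fourierCLM ℂ _), fun f => ?_⟩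
  rw [ContinuousLinearMap.comp_apply, integralCLM_apply, FourierTransform.fourierCLM_apply,
    integral_massShellMeasure (SchwartzMap.integrable _), KL]
  refine setIntegral_congr_fun measurableSet_Ici fun m2 _ =>
    integral_congr_ae (.of_forall fun p => ?_)
  dsimp only
  rw [NNReal.smul_def, coe_invShellEnergy, Complex.real_smul, Complex.ofReal_inv, div_eq_inv_mul]
  rfl
end

section
/- (Corollary 3.1.) Let ρ be a polynomially bounded positive Borel measure on [0,∞) and W_ρ its Källén–Lehmann functional. If the singularity hypothesis holds for W_ρ — that is, there exist a real ω > 2 and a Schwartz function f on ℝ⁴ such that λ^ω W_{ρ,λ}(f) does not converge to 0 as λ → 0⁺ — then the total spectral mass is infinite: ρ([0,∞)) = ∞. This necessary condition is independent of the mass of any single atom of ρ. -/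
open MeasureTheory Filter Topology SchwartzMap
open scoped FourierTransform

/-!
If `ρ([0,∞))` were finite, the substitution `p ↦ λ p` in the momentum integral gives the exact
scaling `KLinner (f(λ⁻¹ ·)) m² = λ² · KLinner f (λ² m²)`. Since `√(|p|² + m²) ≥ |p|` and
`|f̂(ξ)| ≤ D (1 + |ξ|)⁻⁴`, the inner integral is bounded uniformly in `m² ≥ 0` by
`D ∫_{ℝ³} ((1 + |q|)⁴ |q|)⁻¹ dq < ∞`. Integrating against the finite measure `ρ` yields
`|W_{ρ,λ}(f)| ≤ K λ⁻²`, so `λ^ω W_{ρ,λ}(f) → 0` for every `ω > 2`.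
-/

theorem SchwartzMap.exists_norm_le_div_one_add_norm_pow {E F : Type*} [NormedAddCommGroup E]
    [NormedSpace ℝ E] [NormedAddCommGroup F] [NormedSpace ℝ F] (g : 𝓢(E, F)) (k : ℕ) :
    ∃ D : ℝ, ∀ x, ‖g x‖ ≤ D / (1 + ‖x‖) ^ k := by
  refine ⟨2 ^ k * (Finset.Iic (k, 0)).sup (fun m => SchwartzMap.seminorm ℝ m.1 m.2) g,
    fun x => ?_⟩
  rw [le_div_iff₀' (by positivity)]
  simpa using one_add_le_sup_seminorm_apply (𝕜 := ℝ) (m := (k, 0)) le_rfl le_rfl g x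

open scoped RealInnerProductSpace in
theorem Real.fourier_comp_inv_smul {V E : Type*} [NormedAddCommGroup V] [InnerProductSpace ℝ V]
    [FiniteDimensional ℝ V] [MeasurableSpace V] [BorelSpace V] [NormedAddCommGroup E]
    [NormedSpace ℂ E] (f : V → E) {c : ℝ} (hc : 0 < c) (ξ : V) :
    𝓕 (fun x => f (c⁻¹ • x)) ξ = c ^ Module.finrank ℝ V • 𝓕 f (c • ξ) := by
  calc 𝓕 (fun x => f (c⁻¹ • x)) ξ
      = ∫ v, (fun w => 𝐞 (-⟪w, c • ξ⟫) • f w) (c⁻¹ • v) := by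
        simp only [Real.fourier_eq, real_inner_smul_left, real_inner_smul_right,
          mul_inv_cancel_left₀ hc.ne']
    _ = c ^ Module.finrank ℝ V • 𝓕 f (c • ξ) :=
        Measure.integral_comp_inv_smul_of_nonneg (volume : Measure V)
          (fun w => 𝐞 (-⟪w, c • ξ⟫) • f w) hc.le

section timeSpace

variable (p0 : ℝ) (p : EuclideanSpace ℝ (Fin 3))

@[simp]
theorem timeSpace_apply_zero : timeSpace p0 p 0 = p0 := rfl

@[simp]
theorem timeSpace_apply_succ (j : Fin 3) : timeSpace p0 p j.succ = p j := rfl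

theorem smul_timeSpace (c : ℝ) : c • timeSpace p0 p = timeSpace (c * p0) (c • p) := by
  ext i
  refine Fin.cases ?_ (fun j => ?_) i <;> simp

theorem norm_le_norm_timeSpace : ‖p‖ ≤ ‖timeSpace p0 p‖ := by
  rw [EuclideanSpace.norm_eq, EuclideanSpace.norm_eq, Fin.sum_univ_succ]
  exact Real.sqrt_le_sqrt (le_add_of_nonneg_left (sq_nonneg _))

end timeSpace

open Module Set in
theorem integrable_inv_one_add_norm_pow_mul_norm {E : Type*} [NormedAddCommGroup E]
    [NormedSpace ℝ E] [FiniteDimensional ℝ E] [MeasurableSpace E] [BorelSpace E]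
    (μ : Measure E) [μ.IsAddHaarMeasure] {k : ℕ} (hE : 2 ≤ finrank ℝ E)
    (hk : finrank ℝ E ≤ k) :
    Integrable (fun x : E => ((1 + ‖x‖) ^ k * ‖x‖)⁻¹) μ := by
  have : Nontrivial E := Module.nontrivial_of_finrank_pos (R := ℝ) (by omega)
  rw [integrable_fun_norm_addHaar μ (f := fun y => ((1 + y) ^ k * y)⁻¹)]
  obtain ⟨j, hj⟩ : ∃ j, finrank ℝ E = j + 2 := ⟨_, (Nat.sub_add_cancel hE).symm⟩
  obtain ⟨m, rfl⟩ : ∃ m, k = j + m := ⟨k - j, by omega⟩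
  have hm : (finrank ℝ ℝ : ℝ) < m := by
    rw [finrank_self]; exact_mod_cast (by omega : 1 < m)
  refine ((integrable_one_add_norm hm).integrableOn (s := Ioi 0)).mono'
    (by fun_prop : Measurable _).aestronglyMeasurable
    (ae_restrict_of_forall_mem measurableSet_Ioi fun y (hy : 0 < y) => ?_)
  have hy1 : 0 < 1 + y := by positivity
  calc ‖y ^ (finrank ℝ E - 1) • ((1 + y) ^ (j + m) * y)⁻¹‖
      = (y / (1 + y)) ^ j * ((1 + y) ^ m)⁻¹ := by
        rw [hj, Nat.add_succ_sub_one, smul_eq_mul, Real.norm_of_nonneg (by positivity),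
          div_pow, pow_succ]
        field_simp
        ring
    _ ≤ ((1 + y) ^ m)⁻¹ :=
        mul_le_of_le_one_left (by positivity)
          (pow_le_one₀ (by positivity) ((div_le_one hy1).2 (by linarith)))
    _ = (1 + ‖y‖) ^ (-(m : ℝ)) := by
        rw [Real.norm_of_nonneg hy.le, Real.rpow_neg hy1.le, Real.rpow_natCast]

theorem Real.sqrt_norm_smul_sq_add {E : Type*} [NormedAddCommGroup E] [NormedSpace ℝ E] (p : E)
    {c : ℝ} (hc : 0 ≤ c) (m2 : ℝ) :
    Real.sqrt (‖c • p‖ ^ 2 + c ^ 2 * m2) = c * Real.sqrt (‖p‖ ^ 2 + m2) := by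
  rw [norm_smul, Real.norm_of_nonneg hc, mul_pow, ← mul_add, Real.sqrt_mul (sq_nonneg c),
    Real.sqrt_sq hc]

theorem KLinner_comp_inv_smul (f : EuclideanSpace ℝ (Fin 4) → ℂ) {lam : ℝ} (hl : 0 < lam)
    (m2 : ℝ) :
    KLinner (fun x => f (lam⁻¹ • x)) m2 = ((lam ^ 2 : ℝ) : ℂ) * KLinner f (lam ^ 2 * m2) := by
  set F : EuclideanSpace ℝ (Fin 3) → ℂ := fun q =>
    𝓕 f (timeSpace (Real.sqrt (‖q‖ ^ 2 + lam ^ 2 * m2)) q) /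
      (Real.sqrt (‖q‖ ^ 2 + lam ^ 2 * m2) : ℂ)
  have hF : ∀ p, 𝓕 (fun x => f (lam⁻¹ • x)) (timeSpace (Real.sqrt (‖p‖ ^ 2 + m2)) p) /
      (Real.sqrt (‖p‖ ^ 2 + m2) : ℂ) = ((lam ^ 5 : ℝ) : ℂ) * F (lam • p) := by
    intro p
    simp only [F, Real.fourier_comp_inv_smul f hl, finrank_euclideanSpace_fin, smul_timeSpace,
      Real.sqrt_norm_smul_sq_add p hl.le]
    rw [Complex.real_smul]
    push_cast
    field_simp
  have h3 : Module.finrank ℝ (EuclideanSpace ℝ (Fin 3)) = 3 := finrank_euclideanSpace_fin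
  simp only [KLinner, hF, integral_const_mul, Measure.integral_comp_smul_of_nonneg volume F lam
    (hR := hl.le), h3]
  rw [Complex.real_smul, ← mul_assoc, ← Complex.ofReal_mul]
  congr 2
  field_simp

theorem norm_KLinner_le {g : EuclideanSpace ℝ (Fin 4) → ℂ} {D : ℝ}
    (hD : ∀ ξ, ‖𝓕 g ξ‖ ≤ D / (1 + ‖ξ‖) ^ 4) {m2 : ℝ} (hm2 : 0 ≤ m2) :
    ‖KLinner g m2‖ ≤ D * ∫ q : EuclideanSpace ℝ (Fin 3), ((1 + ‖q‖) ^ 4 * ‖q‖)⁻¹ := by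
  have hD0 : 0 ≤ D := by simpa using (norm_nonneg _).trans (hD 0)
  have hint := (integrable_inv_one_add_norm_pow_mul_norm (volume : Measure
    (EuclideanSpace ℝ (Fin 3))) (k := 4) (by simp) (by simp)).const_mul D
  rw [← integral_const_mul]
  refine norm_integral_le_of_norm_le hint ?_
  filter_upwards [compl_mem_ae_iff.2 (measure_singleton 0)] with p (hp : p ≠ 0)
  set c := Real.sqrt (‖p‖ ^ 2 + m2)
  have hpc : ‖p‖ ≤ c := Real.le_sqrt_of_sq_le (le_add_of_nonneg_right hm2)
  have hp0 : 0 < ‖p‖ := norm_pos_iff.2 hp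
  have hdecay : ‖𝓕 g (timeSpace c p)‖ ≤ D / (1 + ‖p‖) ^ 4 :=
    (hD _).trans (by gcongr; exact norm_le_norm_timeSpace c p)
  rw [norm_div, Complex.norm_real, Real.norm_of_nonneg (Real.sqrt_nonneg _)]
  calc ‖𝓕 g (timeSpace c p)‖ / c ≤ D / (1 + ‖p‖) ^ 4 / ‖p‖ :=
        div_le_div₀ (by positivity) hdecay hp0 hpc
    _ = D * ((1 + ‖p‖) ^ 4 * ‖p‖)⁻¹ := by rw [div_div, div_eq_mul_inv]

theorem norm_KLscaled_le {ρ : Measure ℝ} (hρ : ρ (Set.Ici 0) < ⊤)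
    {f : EuclideanSpace ℝ (Fin 4) → ℂ} {D : ℝ} (hD : ∀ ξ, ‖𝓕 f ξ‖ ≤ D / (1 + ‖ξ‖) ^ 4)
    {lam : ℝ} (hl : 0 < lam) :
    ‖KLscaled ρ lam f‖ ≤
      D * (∫ q : EuclideanSpace ℝ (Fin 3), ((1 + ‖q‖) ^ 4 * ‖q‖)⁻¹) * ρ.real (Set.Ici 0) /
        lam ^ 2 := by
  set I := ∫ q : EuclideanSpace ℝ (Fin 3), ((1 + ‖q‖) ^ 4 * ‖q‖)⁻¹
  have hinner : ∀ m2 ∈ Set.Ici (0 : ℝ),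
      ‖KLinner (fun x => f (lam⁻¹ • x)) m2‖ ≤ lam ^ 2 * (D * I) := by
    intro m2 (hm2 : 0 ≤ m2)
    rw [KLinner_comp_inv_smul f hl, norm_mul, Complex.norm_real,
      Real.norm_of_nonneg (by positivity)]
    exact mul_le_mul_of_nonneg_left (norm_KLinner_le hD (by positivity)) (by positivity)
  rw [KLscaled, norm_mul, Complex.norm_real, Real.norm_of_nonneg (by positivity)]
  calc (lam ^ 4)⁻¹ * ‖KL ρ (fun x => f (lam⁻¹ • x))‖
      ≤ (lam ^ 4)⁻¹ * (lam ^ 2 * (D * I) * ρ.real (Set.Ici 0)) := by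
        gcongr
        exact norm_setIntegral_le_of_norm_le_const hρ hinner
    _ = D * I * ρ.real (Set.Ici 0) / lam ^ 2 := by
        field_simp

theorem kl_singularity_implies_infinite_mass_general (ρ : Measure ℝ)
    (hsing : ∃ ω : ℝ, 2 < ω ∧ ∃ f : 𝓢(EuclideanSpace ℝ (Fin 4), ℂ),
      ¬ Tendsto (fun lam : ℝ => ((lam ^ ω : ℝ) : ℂ) * KLscaled ρ lam ⇑f)
          (𝓝[>] (0 : ℝ)) (𝓝 0)) :
    ρ (Set.Ici (0 : ℝ)) = ⊤ := by
  obtain ⟨ω, hω, f, hf⟩ := hsing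
  by_contra hfin
  apply hf
  obtain ⟨D, hD⟩ := (𝓕 f).exists_norm_le_div_one_add_norm_pow 4
  set K := D * (∫ q : EuclideanSpace ℝ (Fin 3), ((1 + ‖q‖) ^ 4 * ‖q‖)⁻¹) *
    ρ.real (Set.Ici 0)
  have hbound : ∀ lam ∈ Set.Ioi (0 : ℝ),
      ‖((lam ^ ω : ℝ) : ℂ) * KLscaled ρ lam ⇑f‖ ≤ K * lam ^ (ω - 2) := by
    intro lam (hl : 0 < lam)
    rw [norm_mul, Complex.norm_real, Real.norm_of_nonneg (by positivity),
      Real.rpow_sub hl, Real.rpow_two, mul_div_left_comm]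
    exact mul_le_mul_of_nonneg_left (norm_KLscaled_le (lt_top_iff_ne_top.2 hfin) hD hl)
      (by positivity)
  have hlim : Tendsto (fun lam : ℝ => K * lam ^ (ω - 2)) (𝓝[>] 0) (𝓝 0) := by
    have h := (Real.continuousAt_rpow_const 0 (ω - 2) (Or.inr (by linarith))).tendsto
    rw [Real.zero_rpow (by linarith)] at h
    simpa using (h.mono_left nhdsWithin_le_nhds).const_mul K
  exact squeeze_zero_norm' (eventually_nhdsWithin_of_forall hbound) hlim

/-- Corollary 3.1: Let `ρ` be a polynomially bounded positive Borel measure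
on `[0,∞)`. If the singularity hypothesis holds for `W_ρ`, i.e. there exist `ω > 2` and a
Schwartz `f` on ℝ⁴ such that `λ^ω W_{ρ,λ}(f)` does not tend to `0` as `λ → 0⁺`, then the
total spectral mass is infinite: `ρ([0,∞)) = ∞`. -/
theorem kl_singularity_implies_infinite_mass (ρ : Measure ℝ) (C : ℝ) (N : ℕ)
    (hρ : ∀ L : ℝ, 0 ≤ L → ρ (Set.Icc 0 L) ≤ ENNReal.ofReal (C * (1 + L ^ N)))
    (hsing : ∃ ω : ℝ, 2 < ω ∧ ∃ f : 𝓢(EuclideanSpace ℝ (Fin 4), ℂ),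
      ¬ Tendsto (fun lam : ℝ => ((lam ^ ω : ℝ) : ℂ) * KLscaled ρ lam ⇑f)
          (𝓝[>] (0 : ℝ)) (𝓝 0)) :
    ρ (Set.Ici (0 : ℝ)) = ⊤ :=
  kl_singularity_implies_infinite_mass_general ρ hsing
end
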